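/- arXiv:2511.10456 — 3 statements merged into one kernel-verified Lean document; each statement's English description precedes it below -/
import Mathlib

section
/- The tensor product of a Feller semigroup is jointly strongly continuous at time zero: for every n ∈ ℕ, every v ∈ C₀(Eⁿ), and every ε > 0, there exists δ > 0 such that whenever t_1, …, t_n ≥ 0 satisfy max_{i=1,…,n} t_i < δ, one has ‖T^{⊗n}_{t_1,…,t_n} v − v‖_∞ < ε. -/
open MeasureTheory ProbabilityTheory
open scoped ZeroAtInfty

/-- The operator `T_t f (x) = ∫_E f(y) p_t(x, dy)` associated with a family of
transition kernels `p`. -/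
noncomputable def MBP.T {E : Type*} [MeasurableSpace E]
    (p : ℝ → Kernel E E) (t : ℝ) (f : E → ℝ) (x : E) : ℝ :=
  ∫ y, f y ∂(p t x)

/-- The `n`-fold tensor product
`(T^{⊗n}_{t_1,…,t_n} v)(x_1,…,x_n) = ∫⋯∫ v(y_1,…,y_n) p_{t_1}(x_1,dy_1)⋯p_{t_n}(x_n,dy_n)`,
realized as the integral of `v` against the product of the measures `p_{t_i}(x_i, ·)`. -/
noncomputable def MBP.Tn {E : Type*} [MeasurableSpace E]
    (p : ℝ → Kernel E E) {n : ℕ} (t : Fin n → ℝ)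
    (v : (Fin n → E) → ℝ) (x : Fin n → E) : ℝ :=
  ∫ y, v y ∂(Measure.pi fun i => p (t i) (x i))

namespace MBP

lemma pi_dirac {ι : Type*} [Fintype ι] {X : ι → Type*} [∀ i, MeasurableSpace (X i)]
    (x : ∀ i, X i) :
    Measure.pi (fun i => Measure.dirac (x i)) = Measure.dirac x := by
  refine Measure.pi_eq fun s hs => ?_
  rw [Measure.dirac_apply' _ (MeasurableSet.univ_pi hs)]
  by_cases hx : x ∈ Set.pi Set.univ s
  · rw [Set.indicator_of_mem hx]
    refine (Finset.prod_eq_one fun i _ => ?_).symm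
    rw [Measure.dirac_apply' _ (hs i),
      Set.indicator_of_mem (hx i (Set.mem_univ i))]
    rfl
  · rw [Set.indicator_of_notMem hx]
    rw [Set.mem_univ_pi] at hx
    push_neg at hx
    obtain ⟨i, hi⟩ := hx
    refine (Finset.prod_eq_zero (Finset.mem_univ i) ?_).symm
    rw [Measure.dirac_apply' _ (hs i), Set.indicator_of_notMem hi]

variable {E : Type*} [MetricSpace E] [LocallyCompactSpace E]
  [TopologicalSpace.SeparableSpace E] [MeasurableSpace E] [BorelSpace E] {m : ℕ}

/-- The slice of a `C₀` function on `E^{m+1}` in coordinate `k`, as a `C₀` function on `E`. -/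
noncomputable def slice (v : C₀((Fin (m + 1) → E), ℝ)) (k : Fin (m + 1))
    (z : Fin m → E) : C₀(E, ℝ) where
  toFun y := v (k.insertNth y z)
  continuous_toFun := by
    have : Continuous fun y : E => k.insertNth (α := fun _ => E) y z :=
      Continuous.finInsertNth (A := fun _ : Fin (m + 1) => E) k continuous_id continuous_const
    exact v.continuous.comp this
  zero_at_infty' := by
    refine (zero_at_infty v).comp ?_
    rw [Filter.hasBasis_cocompact.tendsto_right_iff]
    intro K hK
    have hK' : IsCompact ((fun f : Fin (m + 1) → E => f k) '' K) :=
      hK.image (continuous_apply k)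
    filter_upwards [hK'.compl_mem_cocompact] with y hy hmem
    exact hy ⟨_, hmem, by simpa using k.insertNth_apply_same y z⟩

lemma slice_apply (v : C₀((Fin (m + 1) → E), ℝ)) (k : Fin (m + 1))
    (z : Fin m → E) (y : E) : slice v k z y = v (k.insertNth y z) := by rfl


/-- The slices of `v` admit a finite pointwise `r`-net in `C₀(E, ℝ)`. -/
lemma slice_net (v : C₀((Fin (m + 1) → E), ℝ)) (r : ℝ) (hr : 0 < r) :
    ∃ G : Set C₀(E, ℝ), G.Finite ∧ G.Nonempty ∧
      ∀ (k : Fin (m + 1)) (z : Fin m → E), ∃ g ∈ G, ∀ y, |slice v k z y - g y| ≤ r := by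
  -- continuity of `z ↦ slice v k z`
  have hcont : ∀ k : Fin (m + 1), Continuous (slice v k) := by
    intro k
    rw [Metric.continuous_iff]
    intro z ε hε
    obtain ⟨η, hη, hv⟩ := Metric.uniformContinuous_iff.mp
      (ZeroAtInftyContinuousMap.uniformContinuous v) (ε / 2) (half_pos hε)
    refine ⟨η, hη, fun z' hz' => ?_⟩
    have hle : dist (slice v k z') (slice v k z) ≤ ε / 2 := by
      rw [← ZeroAtInftyContinuousMap.dist_toBCF_eq_dist]
      refine (BoundedContinuousFunction.dist_le (half_pos hε).le).mpr fun y => ?_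
      refine (hv ?_).le
      have hdd : dist (k.insertNth y z' : Fin (m + 1) → E) (k.insertNth y z) ≤ dist z' z := by
        refine (dist_pi_le_iff dist_nonneg).mpr fun j => ?_
        rcases eq_or_ne j k with h | h
        · subst h; simp [Fin.insertNth_apply_same, dist_nonneg]
        · obtain ⟨j', rfl⟩ := Fin.exists_succAbove_eq h
          simpa [Fin.insertNth_apply_succAbove] using dist_le_pi_dist z' z j'
      exact lt_of_le_of_lt hdd hz'
    exact lt_of_le_of_lt hle (half_lt_self hε)
  -- outside a compact set of parameters, slices are uniformly small
  have hvan : ∀ k : Fin (m + 1), ∃ K : Set (Fin m → E), IsCompact K ∧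
      ∀ z ∉ K, ∀ y, |slice v k z y| ≤ r := by
    intro k
    have hmem : v ⁻¹' Metric.closedBall 0 r ∈ Filter.cocompact (Fin (m + 1) → E) :=
      zero_at_infty v (Metric.closedBall_mem_nhds 0 hr)
    obtain ⟨K, hK, hKsub⟩ := Filter.mem_cocompact.mp hmem
    refine ⟨(fun f j => f (k.succAbove j)) '' K,
      hK.image (continuous_pi fun j => continuous_apply _), fun z hz y => ?_⟩
    have hnot : k.insertNth y z ∉ K := by
      intro hmem'
      exact hz ⟨k.insertNth y z, hmem', funext fun j => by simp⟩
    have : v (k.insertNth y z) ∈ Metric.closedBall (0 : ℝ) r := hKsub hnot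
    simpa [Real.dist_eq, slice_apply] using Metric.mem_closedBall.mp this
  -- build the net
  choose K hKc hKout using hvan
  have hnet : ∀ k : Fin (m + 1), ∃ t : Set C₀(E, ℝ), t.Finite ∧
      ∀ z ∈ K k, ∃ g ∈ t, dist (slice v k z) g < r := by
    intro k
    have himg : IsCompact (slice v k '' K k) := (hKc k).image (hcont k)
    obtain ⟨t, htfin, htcov⟩ := Metric.totallyBounded_iff.mp himg.totallyBounded r hr
    refine ⟨t, htfin, fun z hz => ?_⟩
    have := htcov ⟨z, hz, rfl⟩
    simpa using this
  choose t htfin htcov using hnet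
  refine ⟨{0} ∪ ⋃ k, t k, (Set.finite_singleton 0).union
    (Set.finite_iUnion htfin), ⟨0, Or.inl rfl⟩, fun k z => ?_⟩
  by_cases hz : z ∈ K k
  · obtain ⟨g, hg, hdist⟩ := htcov k z hz
    refine ⟨g, Or.inr (Set.mem_iUnion.mpr ⟨k, hg⟩), fun y => ?_⟩
    have : dist (slice v k z y) (g y) ≤ dist (slice v k z) g := by
      rw [← ZeroAtInftyContinuousMap.dist_toBCF_eq_dist]
      exact BoundedContinuousFunction.dist_coe_le_dist (f := (slice v k z).toBCF) (g := g.toBCF) y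
    rw [Real.dist_eq] at this
    exact this.trans hdist.le
  · exact ⟨0, Or.inl rfl, fun y => by simpa using hKout k z hz y⟩


lemma isFiniteMeasure_kernel (p : ℝ → Kernel E E)
    (hsub : ∀ t : ℝ, 0 ≤ t → ∀ x : E, p t x Set.univ ≤ 1) {t : ℝ} (ht : 0 ≤ t) (x : E) :
    IsFiniteMeasure (p t x) :=
  ⟨lt_of_le_of_lt (hsub t ht x) ENNReal.one_lt_top⟩

lemma T_sub_le (p : ℝ → Kernel E E)
    (hsub : ∀ t : ℝ, 0 ≤ t → ∀ x : E, p t x Set.univ ≤ 1)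
    {τ : ℝ} (hτ : 0 ≤ τ) (f g : C₀(E, ℝ)) {r : ℝ} (hr : 0 ≤ r)
    (h : ∀ y, |f y - g y| ≤ r) (x : E) : |T p τ f x - T p τ g x| ≤ r := by
  haveI := isFiniteMeasure_kernel p hsub hτ x
  have hf : Integrable (fun y => f y) (p τ x) := f.toBCF.integrable _
  have hg : Integrable (fun y => g y) (p τ x) := g.toBCF.integrable _
  rw [T, T, ← integral_sub hf hg]
  have hb := norm_integral_le_of_norm_le_const (μ := p τ x)
    (f := fun y => f y - g y) (C := r)
    (Filter.Eventually.of_forall fun y => by simpa [Real.norm_eq_abs] using h y)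
  have hmass : ((p τ x) Set.univ).toReal ≤ 1 := by
    simpa using ENNReal.toReal_mono ENNReal.one_ne_top (hsub τ hτ x)
  calc |∫ y, (f y - g y) ∂ p τ x| = ‖∫ y, (f y - g y) ∂ p τ x‖ := (Real.norm_eq_abs _).symm
    _ ≤ r * ((p τ x) Set.univ).toReal := hb
    _ ≤ r := mul_le_of_le_one_right hr hmass

lemma uniform_slice (p : ℝ → Kernel E E)
    (hsub : ∀ t : ℝ, 0 ≤ t → ∀ x : E, p t x Set.univ ≤ 1)
    (hstrong : ∀ f : C₀(E, ℝ), ∀ ε : ℝ, 0 < ε → ∃ δ : ℝ, 0 < δ ∧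
      ∀ t : ℝ, 0 ≤ t → t < δ → ∀ x, |T p t f x - f x| < ε)
    (v : C₀((Fin (m + 1) → E), ℝ)) {ε : ℝ} (hε : 0 < ε) :
    ∃ δ : ℝ, 0 < δ ∧ ∀ τ : ℝ, 0 ≤ τ → τ < δ → ∀ (k : Fin (m + 1)) (z : Fin m → E) (y : E),
      |T p τ (slice v k z) y - slice v k z y| ≤ ε := by
  obtain ⟨G, hGfin, hGne, hGnet⟩ := slice_net v (ε / 3) (by positivity)
  choose d hd hd' using fun g : C₀(E, ℝ) => hstrong g (ε / 3) (by positivity)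
  obtain ⟨g₀, hg₀⟩ := hGne
  have hne : hGfin.toFinset.Nonempty := ⟨g₀, hGfin.mem_toFinset.mpr hg₀⟩
  refine ⟨hGfin.toFinset.inf' hne d, ?_, ?_⟩
  · exact (Finset.lt_inf'_iff hne).mpr fun g _ => hd g
  · intro τ hτ0 hτ k z y
    obtain ⟨g, hgG, hg⟩ := hGnet k z
    have h1 : |T p τ (slice v k z) y - T p τ g y| ≤ ε / 3 :=
      T_sub_le p hsub hτ0 _ g (by positivity) hg y
    have h2 : |T p τ g y - g y| < ε / 3 :=
      hd' g τ hτ0 (lt_of_lt_of_le hτ (Finset.inf'_le d (hGfin.mem_toFinset.mpr hgG))) y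
    have h3 : |g y - slice v k z y| ≤ ε / 3 := by rw [abs_sub_comm]; exact hg y
    have h4 := abs_sub_le (T p τ (slice v k z) y) (g y) (slice v k z y)
    have h5 := abs_sub_le (T p τ (slice v k z) y) (T p τ g y) (g y)
    linarith


lemma step (p : ℝ → Kernel E E)
    (hsub : ∀ t : ℝ, 0 ≤ t → ∀ x : E, p t x Set.univ ≤ 1)
    (h0 : ∀ x : E, p 0 x = MeasureTheory.Measure.dirac x)
    (v : C₀((Fin (m + 1) → E), ℝ)) (s : Fin (m + 1) → ℝ) (hs : ∀ i, 0 ≤ s i)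
    (k : Fin (m + 1)) (hsk : s k = 0) {τ : ℝ} (hτ : 0 ≤ τ)
    (x : Fin (m + 1) → E) {B : ℝ} (hB : 0 ≤ B)
    (H : ∀ z : Fin m → E, |T p τ (slice v k z) (x k) - slice v k z (x k)| ≤ B) :
    |Tn p (Function.update s k τ) v x - Tn p s v x| ≤ B := by
  haveI : SecondCountableTopology E := UniformSpace.secondCountable_of_separable E
  haveI hμf : ∀ i, IsFiniteMeasure (p (Function.update s k τ i) (x i)) := fun i => by
    refine isFiniteMeasure_kernel p hsub ?_ (x i)
    rcases eq_or_ne i k with h | h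
    · subst h; rw [Function.update_self]; exact hτ
    · rw [Function.update_of_ne h]; exact hs i
  haveI hνf : ∀ i, IsFiniteMeasure (p (s i) (x i)) := fun i =>
    isFiniteMeasure_kernel p hsub (hs i) (x i)
  haveI : IsFiniteMeasure (p τ (x k)) := isFiniteMeasure_kernel p hsub hτ (x k)
  have hu : ∀ j : Fin m, Function.update s k τ (k.succAbove j) = s (k.succAbove j) :=
    fun j => Function.update_of_ne (Fin.succAbove_ne k j) _ _
  set π' : Measure (Fin m → E) :=
    Measure.pi fun j => p (s (k.succAbove j)) (x (k.succAbove j)) with hπ'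
  have hmass : π' Set.univ ≤ 1 := by
    rw [hπ', Measure.pi_univ]
    exact Finset.prod_le_one (fun j _ => zero_le) (fun j _ => hsub _ (hs _) _)
  set e := MeasurableEquiv.piFinSuccAbove (fun _ : Fin (m + 1) => E) k with he
  have hvsm : StronglyMeasurable (fun w : Fin (m + 1) → E => v w) :=
    v.continuous.stronglyMeasurable
  have hint : ∀ ρ : Measure E, IsFiniteMeasure ρ →
      Integrable (fun q : E × (Fin m → E) => v (e.symm q)) (ρ.prod π') := by
    intro ρ hρ
    haveI := hρ
    refine ⟨(hvsm.comp_measurable e.symm.measurable).aestronglyMeasurable, ?_⟩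
    exact HasFiniteIntegral.of_bounded (C := ‖v.toBCF‖)
      (Filter.Eventually.of_forall fun q => v.toBCF.norm_coe_le_norm _)
  -- identity for the updated times
  have eq1 : Tn p (Function.update s k τ) v x = ∫ z, T p τ (slice v k z) (x k) ∂ π' := by
    calc Tn p (Function.update s k τ) v x
        = ∫ q, v (e.symm q) ∂ ((p (Function.update s k τ k) (x k)).prod
            (Measure.pi fun j => p (Function.update s k τ (k.succAbove j))
              (x (k.succAbove j)))) :=
          (((measurePreserving_piFinSuccAbove
            (fun i => p (Function.update s k τ i) (x i)) k).symm e).integral_comp'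
            (fun w => v w)).symm
      _ = ∫ q, v (e.symm q) ∂ ((p τ (x k)).prod π') := by
          simp only [Function.update_self, hu, hπ']
      _ = ∫ z, ∫ y, v (e.symm (y, z)) ∂ (p τ (x k)) ∂ π' :=
          integral_prod_symm _ (hint _ inferInstance)
      _ = ∫ z, T p τ (slice v k z) (x k) ∂ π' := rfl
  -- identity for the original times
  have eqs : Tn p s v x = ∫ z, slice v k z (x k) ∂ π' := by
    calc Tn p s v x
        = ∫ q, v (e.symm q) ∂ ((p (s k) (x k)).prod π') :=
          (((measurePreserving_piFinSuccAbove
            (fun i => p (s i) (x i)) k).symm e).integral_comp' (fun w => v w)).symm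
      _ = ∫ z, ∫ y, v (e.symm (y, z)) ∂ (p (s k) (x k)) ∂ π' :=
          integral_prod_symm _ (hint _ inferInstance)
      _ = ∫ z, slice v k z (x k) ∂ π' := by
          refine integral_congr_ae (Filter.Eventually.of_forall fun z => ?_)
          rw [hsk, h0]
          exact integral_dirac' _ _ (hvsm.comp_measurable
            (e.symm.measurable.comp (measurable_id.prodMk measurable_const)))
  have hint1 : Integrable (fun z => T p τ (slice v k z) (x k)) π' :=
    (hint (p τ (x k)) inferInstance).integral_prod_right
  have hint2 : Integrable (fun z => slice v k z (x k)) π' := by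
    refine ⟨?_, ?_⟩
    · have hc : Continuous fun z : Fin m → E => v (k.insertNth (x k) z) := by
        have : Continuous fun z : Fin m → E => k.insertNth (α := fun _ => E) (x k) z :=
          Continuous.finInsertNth (A := fun _ : Fin (m + 1) => E) k
            continuous_const continuous_id
        exact v.continuous.comp this
      exact hc.stronglyMeasurable.aestronglyMeasurable
    · exact HasFiniteIntegral.of_bounded (C := ‖v.toBCF‖)
        (Filter.Eventually.of_forall fun z => v.toBCF.norm_coe_le_norm _)
  rw [eq1, eqs, ← integral_sub hint1 hint2]
  have hb := norm_integral_le_of_norm_le_const (μ := π')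
    (f := fun z => T p τ (slice v k z) (x k) - slice v k z (x k)) (C := B)
    (Filter.Eventually.of_forall fun z => by simpa [Real.norm_eq_abs] using H z)
  have hm1 : (π' Set.univ).toReal ≤ 1 := by
    simpa using ENNReal.toReal_mono ENNReal.one_ne_top hmass
  calc |∫ z, (T p τ (slice v k z) (x k) - slice v k z (x k)) ∂ π'|
      = ‖∫ z, (T p τ (slice v k z) (x k) - slice v k z (x k)) ∂ π'‖ :=
        (Real.norm_eq_abs _).symm
    _ ≤ B * (π' Set.univ).toReal := hb
    _ ≤ B := mul_le_of_le_one_right hB hm1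

end MBP

/-- the tensor product of a Feller semigroup is jointly strongly
continuous at time zero: for every `v ∈ C₀(Eⁿ)` and `ε > 0` there is `δ > 0`
such that `‖T^{⊗n}_{t_1,…,t_n} v − v‖_∞ < ε` whenever `max_i t_i < δ`, `t_i ≥ 0`. -/
theorem MBP.tensor_strong_continuity {E : Type*} [MetricSpace E]
    [LocallyCompactSpace E] [TopologicalSpace.SeparableSpace E]
    [MeasurableSpace E] [BorelSpace E]
    (p : ℝ → Kernel E E)
    -- the kernels are sub-probability measures
    (hsub : ∀ t : ℝ, 0 ≤ t → ∀ x : E, p t x Set.univ ≤ 1)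
    -- `T_0` is the identity
    (h0 : ∀ x : E, p 0 x = MeasureTheory.Measure.dirac x)
    -- the Chapman–Kolmogorov (semigroup) property `T_{t+s} = T_t T_s`
    (hCK : ∀ s t : ℝ, 0 ≤ s → 0 ≤ t → p (t + s) = (p s).comp (p t))
    -- each `T_t` maps `C₀(E)` into `C₀(E)`
    (hC0 : ∀ t : ℝ, 0 ≤ t → ∀ f : C₀(E, ℝ), ∃ g : C₀(E, ℝ), ∀ x, MBP.T p t f x = g x)
    -- strong continuity: `‖T_t f − f‖_∞ → 0` as `t → 0`
    (hstrong : ∀ f : C₀(E, ℝ), ∀ ε : ℝ, 0 < ε → ∃ δ : ℝ, 0 < δ ∧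
      ∀ t : ℝ, 0 ≤ t → t < δ → ∀ x, |MBP.T p t f x - f x| < ε)
    (n : ℕ) (v : C₀((Fin n → E), ℝ)) (ε : ℝ) (hε : 0 < ε) :
    ∃ δ : ℝ, 0 < δ ∧ ∀ t : Fin n → ℝ, (∀ i, 0 ≤ t i) → (∀ i, t i < δ) →
      ∀ x, |MBP.Tn p t v x - v x| < ε := by
  haveI : SecondCountableTopology E := UniformSpace.secondCountable_of_separable E
  obtain _ | m := n
  · refine ⟨1, one_pos, fun t ht htδ x => ?_⟩
    have hzero : MBP.Tn p t v x = v x := by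
      rw [MBP.Tn]
      have he : (fun i : Fin 0 => p (t i) (x i)) = fun i => Measure.dirac (x i) :=
        funext fun i => i.elim0
      rw [he, MBP.pi_dirac]
      exact integral_dirac' _ _ v.continuous.stronglyMeasurable
    rw [hzero]
    simpa using hε
  · have hBpos : 0 < ε / (m + 2) := by positivity
    obtain ⟨δ, hδpos, hδ⟩ := MBP.uniform_slice p hsub hstrong v hBpos
    refine ⟨δ, hδpos, fun t ht htδ x => ?_⟩
    set f : ℕ → ℝ :=
      fun j => MBP.Tn p (fun i => if (i : ℕ) < j then t i else 0) v x with hf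
    have h1 : f 0 = v x := by
      rw [hf]
      simp only [Nat.not_lt_zero, if_false]
      rw [MBP.Tn]
      have he : (fun i : Fin (m + 1) => p 0 (x i)) = fun i => Measure.dirac (x i) :=
        funext fun i => h0 (x i)
      rw [he, MBP.pi_dirac]
      exact integral_dirac' _ _ v.continuous.stronglyMeasurable
    have h2 : f (m + 1) = MBP.Tn p t v x := by
      simp only [hf]
      congr 1
      funext i
      simp [i.is_lt]
    have hstep : ∀ j : ℕ, j < m + 1 → |f (j + 1) - f j| ≤ ε / (m + 2) := by
      intro j hj
      set k : Fin (m + 1) := ⟨j, hj⟩ with hk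
      have hupd : (fun i : Fin (m + 1) => if (i : ℕ) < j + 1 then t i else 0)
          = Function.update (fun i : Fin (m + 1) => if (i : ℕ) < j then t i else 0)
              k (t k) := by
        funext i
        rcases eq_or_ne i k with h | h
        · subst h
          simp [hk, Function.update_self]
        · rw [Function.update_of_ne h]
          have hij : (i : ℕ) ≠ j := fun hc => h (Fin.ext (by simpa [hk] using hc))
          by_cases h2 : (i : ℕ) < j
          · simp [h2, Nat.lt_succ_of_lt h2]
          · have h3 : ¬ (i : ℕ) < j + 1 := by omega
            simp [h2, h3]
      have hres := MBP.step p hsub h0 v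
        (fun i => if (i : ℕ) < j then t i else 0)
        (fun i => by split
                     · exact ht i
                     · exact le_rfl)
        k (by simp [hk]) (ht k) x hBpos.le
        (fun z => hδ (t k) (ht k) (htδ k) k z (x k))
      calc |f (j + 1) - f j|
          = |MBP.Tn p (Function.update
                (fun i : Fin (m + 1) => if (i : ℕ) < j then t i else 0) k (t k)) v x
              - MBP.Tn p (fun i : Fin (m + 1) => if (i : ℕ) < j then t i else 0) v x| := by
            simp only [hf]
            rw [hupd]
        _ ≤ ε / (m + 2) := hres
    have hm2 : (0 : ℝ) < (m : ℝ) + 2 := by positivity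
    calc |MBP.Tn p t v x - v x|
        = dist (f 0) (f (m + 1)) := by
          rw [h1, h2, Real.dist_eq, abs_sub_comm]
      _ ≤ ∑ i ∈ Finset.range (m + 1), dist (f i) (f (i + 1)) :=
          dist_le_range_sum_dist f (m + 1)
      _ ≤ ∑ i ∈ Finset.range (m + 1), ε / (m + 2) := by
          refine Finset.sum_le_sum fun i hi => ?_
          rw [Real.dist_eq, abs_sub_comm]
          exact hstep i (Finset.mem_range.mp hi)
      _ = (m + 1 : ℝ) * (ε / (m + 2)) := by
          rw [Finset.sum_const, Finset.card_range, nsmul_eq_mul]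
          push_cast
          ring
      _ < (m + 2 : ℝ) * (ε / (m + 2)) := by
          refine mul_lt_mul_of_pos_right (by linarith) (by positivity)
      _ = ε := by field_simp
end

section
/- Let (T_t)_{t≥0} be a Feller semigroup on E with sub-Markov transition kernels p_t(x,dy). Then for every ε > 0, every t > 0, and every compact set K ⊆ E, there exists a compact set K̃ ⊆ E such that p_s(x, K) < ε for all x ∉ K̃ and all s ∈ [0, t]. -/
open MeasureTheory ProbabilityTheory
open scoped ZeroAtInfty

private lemma MBP.grid {t δ : ℝ} (ht : 0 < t) {n : ℕ} (hn : 0 < n)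
    (hstep : t / n < δ) {s : ℝ} (hs0 : 0 ≤ s) (hst : s ≤ t) :
    ∃ i : ℕ, i < n ∧ (i : ℝ) * t / n ≤ s ∧ s - (i : ℝ) * t / n < δ := by
  have hn' : (0:ℝ) < n := by exact_mod_cast hn
  set j := ⌊s * n / t⌋₊ with hj
  by_cases hcase : j ≤ n - 1
  · refine ⟨j, by omega, ?_, ?_⟩
    · have h1 : (j : ℝ) ≤ s * n / t := Nat.floor_le (by positivity)
      calc (j:ℝ) * t / n ≤ (s * n / t) * t / n := by gcongr
        _ = s := by field_simp
    · have h2 : s * n / t < (j : ℝ) + 1 := Nat.lt_floor_add_one _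
      rw [div_lt_iff₀ ht] at h2
      have h3 : s < (j:ℝ) * t / n + t / n := by
        rw [show (j:ℝ) * t / n + t / n = ((j:ℝ) + 1) * t / n by ring, lt_div_iff₀ hn']
        nlinarith
      linarith
  · have hjn : (n : ℝ) ≤ j := by exact_mod_cast (by omega : n ≤ j)
    have h1 : (n:ℝ) ≤ s * n / t := le_trans hjn (Nat.floor_le (by positivity))
    rw [le_div_iff₀ ht] at h1
    have hts : t ≤ s := by nlinarith
    have hseq : s = t := le_antisymm hst hts
    have hc : ((n-1 : ℕ) : ℝ) = (n:ℝ) - 1 := by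
      have := Nat.cast_pred hn (R := ℝ); simpa using this
    refine ⟨n - 1, by omega, ?_, ?_⟩
    · rw [hseq, hc, div_le_iff₀ hn']; nlinarith
    · rw [hseq, hc]
      have : t - ((n:ℝ)-1)*t/n = t/n := by field_simp; ring
      linarith


/-- for a Feller semigroup with sub-Markov kernels `p_t(x,dy)`,
for every `ε > 0`, `t > 0` and compact `K ⊆ E` there is a compact `K̃ ⊆ E` such
that `p_s(x, K) < ε` for all `x ∉ K̃` and all `s ∈ [0, t]`. -/
theorem MBP.feller_escaping {E : Type*} [MetricSpace E]
    [LocallyCompactSpace E] [TopologicalSpace.SeparableSpace E]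
    [MeasurableSpace E] [BorelSpace E]
    (p : ℝ → Kernel E E)
    -- the kernels are sub-probability measures
    (hsub : ∀ t : ℝ, 0 ≤ t → ∀ x : E, p t x Set.univ ≤ 1)
    -- `T_0` is the identity
    (h0 : ∀ x : E, p 0 x = MeasureTheory.Measure.dirac x)
    -- the Chapman–Kolmogorov (semigroup) property `T_{t+s} = T_t T_s`
    (hCK : ∀ s t : ℝ, 0 ≤ s → 0 ≤ t → p (t + s) = (p s).comp (p t))
    -- each `T_t` maps `C₀(E)` into `C₀(E)`
    (hC0 : ∀ t : ℝ, 0 ≤ t → ∀ f : C₀(E, ℝ), ∃ g : C₀(E, ℝ), ∀ x, MBP.T p t f x = g x)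
    -- strong continuity: `‖T_t f − f‖_∞ → 0` as `t → 0`
    (hstrong : ∀ f : C₀(E, ℝ), ∀ ε : ℝ, 0 < ε → ∃ δ : ℝ, 0 < δ ∧
      ∀ t : ℝ, 0 ≤ t → t < δ → ∀ x, |MBP.T p t f x - f x| < ε)
    (ε : ℝ) (hε : 0 < ε) (t : ℝ) (ht : 0 < t) (K : Set E) (hK : IsCompact K) :
    ∃ Kt : Set E, IsCompact Kt ∧
      ∀ x : E, x ∉ Kt → ∀ s ∈ Set.Icc (0 : ℝ) t, p s x K < ENNReal.ofReal ε := by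
  -- Urysohn function
  obtain ⟨f, hfK, -, hfsupp, hf01⟩ :=
    exists_continuous_one_zero_of_isCompact hK isClosed_empty (Set.disjoint_empty K)
  set f0 : C₀(E, ℝ) := ⟨f, hfsupp.is_zero_at_infty⟩ with hf0def
  have hcoe : (f0 : E → ℝ) = ⇑f := rfl
  have hfnn : ∀ y, 0 ≤ f y := fun y => (hf01 y).1
  have hfle1 : ∀ y, f y ≤ 1 := fun y => (hf01 y).2
  have hfin : ∀ (r:ℝ), 0 ≤ r → ∀ x, IsFiniteMeasure (p r x) :=
    fun r hr x => ⟨lt_of_le_of_lt (hsub r hr x) ENNReal.one_lt_top⟩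
  have hintf : ∀ (r:ℝ), 0 ≤ r → ∀ x, Integrable (⇑f) (p r x) := by
    intro r hr x
    haveI := hfin r hr x
    exact f0.toBCF.integrable _
  have hTnn : ∀ (r:ℝ) (x:E), 0 ≤ MBP.T p r (⇑f) x := fun r x => integral_nonneg hfnn
  -- lintegral form
  have hTlin : ∀ (r:ℝ), 0 ≤ r → ∀ x, MBP.T p r (⇑f) x
      = (∫⁻ y, ENNReal.ofReal (f y) ∂ (p r x)).toReal := by
    intro r hr x
    rw [MBP.T, integral_eq_lintegral_of_nonneg_ae (Filter.Eventually.of_forall hfnn)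
      f.continuous.measurable.aestronglyMeasurable]
  have hlin_le_one : ∀ (r:ℝ), 0 ≤ r → ∀ x,
      (∫⁻ y, ENNReal.ofReal (f y) ∂ (p r x)) ≤ 1 := by
    intro r hr x
    calc ∫⁻ y, ENNReal.ofReal (f y) ∂ (p r x)
        ≤ ∫⁻ _, 1 ∂ (p r x) :=
          lintegral_mono fun y => ENNReal.ofReal_le_one.mpr (hfle1 y)
      _ = p r x Set.univ := by simp
      _ ≤ 1 := hsub r hr x
  have hofRealT : ∀ (r:ℝ), 0 ≤ r → ∀ x,
      ENNReal.ofReal (MBP.T p r (⇑f) x) = ∫⁻ y, ENNReal.ofReal (f y) ∂ (p r x) := by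
    intro r hr x
    rw [hTlin r hr x, ENNReal.ofReal_toReal]
    exact ne_top_of_le_ne_top ENNReal.one_ne_top (hlin_le_one r hr x)
  -- semigroup step
  have hsg : ∀ a b : ℝ, 0 ≤ a → 0 ≤ b → ∀ x,
      MBP.T p (a + b) (⇑f) x = ∫ y, MBP.T p b (⇑f) y ∂ (p a x) := by
    intro a b ha hb x
    obtain ⟨g, hg⟩ := hC0 b hb f0
    simp only [hcoe] at hg
    have hgeq : (fun y => MBP.T p b (⇑f) y) = ⇑g := funext fun y => hg y
    have hgnn : ∀ y, 0 ≤ g y := fun y => (hg y) ▸ hTnn b y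
    rw [hTlin (a+b) (by linarith) x, hCK b a hb ha, Kernel.comp_apply,
      Measure.lintegral_bind (p b).measurable.aemeasurable
        f.continuous.measurable.ennreal_ofReal.aemeasurable]
    have heq : ∀ y, (∫⁻ z, ENNReal.ofReal (f z) ∂ (p b y)) = ENNReal.ofReal (g y) := by
      intro y
      rw [← hofRealT b hb y, hg y]
    simp_rw [heq]
    rw [← integral_eq_lintegral_of_nonneg_ae (Filter.Eventually.of_forall hgnn)
      g.continuous.measurable.aestronglyMeasurable, hgeq]
  -- strong continuity parameter
  obtain ⟨δ, hδ, hδ'⟩ := hstrong f0 (ε/2) (half_pos hε)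
  simp only [hcoe] at hδ'
  obtain ⟨n, hn⟩ := exists_nat_gt (t/δ)
  have hn0 : 0 < n := by
    by_contra h
    push_neg at h
    interval_cases n
    simp at hn
    nlinarith [div_pos ht hδ]
  have hn' : (0:ℝ) < n := by exact_mod_cast hn0
  have hstep : t / n < δ := by
    rw [div_lt_iff₀ hn']
    rw [div_lt_iff₀ hδ] at hn
    nlinarith
  -- the C₀ functions on the grid and associated compacts
  have hgs : ∀ i : ℕ, ∃ g : C₀(E,ℝ), ∀ x, MBP.T p ((i:ℝ)*t/n) (⇑f0) x = g x :=
    fun i => hC0 _ (by positivity) f0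
  choose g hg using hgs
  simp only [hcoe] at hg
  have hCex : ∀ i : ℕ, ∃ C : Set E, IsCompact C ∧ Cᶜ ⊆ (g i) ⁻¹' Metric.ball 0 (ε/2) := by
    intro i
    have h1 : Filter.Tendsto (⇑(g i)) (Filter.cocompact E) (nhds 0) :=
      zero_at_infty (g i)
    exact Filter.mem_cocompact.mp (h1 (Metric.ball_mem_nhds (0:ℝ) (half_pos hε)))
  choose C hCcomp hCsub using hCex
  refine ⟨⋃ i ∈ Finset.range n, C i,
    (Finset.range n).isCompact_biUnion (fun i _ => hCcomp i), ?_⟩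
  intro x hx s hs
  obtain ⟨i, hin, hi1, hi2⟩ := MBP.grid ht hn0 hstep hs.1 hs.2
  set a := (i:ℝ)*t/n with hadef
  set r := s - a with hrdef
  have ha : 0 ≤ a := by positivity
  have hr0 : 0 ≤ r := by simp [hrdef]; linarith
  have hrδ : r < δ := hi2
  have hsar : s = a + r := by ring
  haveI := hfin s hs.1 x
  haveI := hfin a ha x
  -- x is outside C i
  have hxCi : x ∉ C i := fun hmem => hx (Set.mem_biUnion (Finset.mem_range.mpr hin) hmem)
  have hgix : |g i x| < ε/2 := by
    have := hCsub i hxCi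
    simpa [Real.dist_eq] using this
  -- step 1
  have e1 : (p s x K).toReal ≤ MBP.T p s (⇑f) x := by
    rw [← measureReal_def, ← integral_indicator_one hK.measurableSet, MBP.T]
    refine integral_mono ((integrable_const (1:ℝ)).indicator hK.measurableSet)
      (hintf s hs.1 x) (fun y => ?_)
    by_cases hy : y ∈ K
    · simp [Set.indicator_of_mem hy, hfK hy]
    · simp [Set.indicator_of_notMem hy, hfnn y]
  -- step 2
  have e2 : MBP.T p s (⇑f) x ≤ MBP.T p a (⇑f) x + ε/2 := by
    rw [hsar, hsg a r ha hr0 x]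
    obtain ⟨h, hh⟩ := hC0 r hr0 f0
    have hint2 : Integrable (fun y => MBP.T p r (⇑f) y) (p a x) := by
      have : (fun y => MBP.T p r (⇑f) y) = ⇑h := funext fun y => hh y
      rw [this]
      exact h.toBCF.integrable _
    have hmust : (p a x Set.univ).toReal ≤ 1 := by
      refine le_trans (ENNReal.toReal_mono ENNReal.one_ne_top (hsub a ha x)) (by simp)
    calc ∫ y, MBP.T p r (⇑f) y ∂ (p a x)
        ≤ ∫ y, (f y + ε/2) ∂ (p a x) := by
          refine integral_mono hint2 ((hintf a ha x).add (integrable_const _)) (fun y => ?_)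
          have := hδ' r hr0 hrδ y
          have habs := abs_lt.mp this
          linarith [habs.1, habs.2]
      _ = MBP.T p a (⇑f) x + (ε/2) * (p a x Set.univ).toReal := by
          rw [integral_add (hintf a ha x) (integrable_const _), integral_const, MBP.T]
          simp [smul_eq_mul, mul_comm, measureReal_def]
      _ ≤ MBP.T p a (⇑f) x + ε/2 := by nlinarith [half_pos hε]
  -- step 3
  have e3 : MBP.T p a (⇑f) x < ε/2 := by
    have := hg i x
    rw [this]
    exact lt_of_le_of_lt (le_abs_self _) hgix
  have hfinal : (p s x K).toReal < ε := by linarith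
  have hne : p s x K ≠ ⊤ :=
    ne_top_of_le_ne_top ENNReal.one_ne_top
      (le_trans (measure_mono (Set.subset_univ K)) (hsub s hs.1 x))
  exact (ENNReal.lt_ofReal_iff_toReal_lt hne).mpr hfinal
end

section
/- Let S be a Polish space, let (μ_n)_{n∈ℕ} be finite Borel measures on S converging weakly to a finite Borel measure μ, and let (f_n)_{n∈ℕ} be continuous real-valued functions on S with sup_n ‖f_n‖_∞ < ∞ that converge to a function f uniformly on every compact subset of S. Then ∫_S f_n dμ_n → ∫_S f dμ as n → ∞. -/
open MeasureTheory Filter Topology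
open scoped BoundedContinuousFunction

open Metric
open scoped ENNReal

namespace MBP

private lemma aux_ball {S : Type*} [MetricSpace S]
    [SecondCountableTopology S] [MeasurableSpace S] [BorelSpace S] [Nonempty S]
    (μ : ℕ → Measure S) (μlim : Measure S)
    [∀ n, IsFiniteMeasure (μ n)] [IsFiniteMeasure μlim]
    (hweak : ∀ g : S →ᵇ ℝ,
      Tendsto (fun n => ∫ x, g x ∂(μ n)) atTop (𝓝 (∫ x, g x ∂μlim)))
    {r δ : ℝ} (hr : 0 < r) (hδ : 0 < δ) :
    ∃ t : Finset S, (∀ n, ((μ n) ((⋃ y ∈ t, closedBall y r)ᶜ)).toReal ≤ δ) ∧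
      ((μlim) ((⋃ y ∈ t, closedBall y r)ᶜ)).toReal ≤ δ := by
  classical
  obtain ⟨u, hu⟩ := TopologicalSpace.exists_dense_seq S
  set F : ℕ → Set S := fun J => ⋃ i ∈ Finset.range (J + 1), closedBall (u i) (r / 2) with hF
  set G : ℕ → Set S := fun J => ⋃ i ∈ Finset.range (J + 1), closedBall (u i) r with hG
  have hFne : ∀ J, (F J).Nonempty := fun J =>
    ⟨u 0, Set.mem_biUnion (Finset.mem_range.mpr (Nat.succ_pos J)) (mem_closedBall_self (by linarith))⟩
  have hFG : ∀ J, F J ⊆ G J := fun J =>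
    Set.iUnion₂_mono fun i _ => closedBall_subset_closedBall (by linarith)
  have hFmono : Monotone F := by
    intro a b hab x hx
    simp only [hF, Set.mem_iUnion, exists_prop, Finset.mem_range] at hx ⊢
    obtain ⟨i, hi, hxi⟩ := hx
    exact ⟨i, by omega, hxi⟩
  have hGmono : Monotone G := by
    intro a b hab x hx
    simp only [hG, Set.mem_iUnion, exists_prop, Finset.mem_range] at hx ⊢
    obtain ⟨i, hi, hxi⟩ := hx
    exact ⟨i, by omega, hxi⟩
  have hFclosed : ∀ J, IsClosed (F J) := fun J =>
    Set.Finite.isClosed_biUnion (Finset.finite_toSet _) fun i _ => isClosed_closedBall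
  have hGclosed : ∀ J, IsClosed (G J) := fun J =>
    Set.Finite.isClosed_biUnion (Finset.finite_toSet _) fun i _ => isClosed_closedBall
  have hFunion : (⋃ J, F J) = Set.univ := by
    ext x
    simp only [Set.mem_iUnion, Set.mem_univ, iff_true]
    obtain ⟨i, hi⟩ : ∃ i, dist x (u i) < r / 2 := by
      have := hu.exists_dist_lt x (half_pos hr)
      simpa [dist_comm] using this
    exact ⟨i, Set.mem_biUnion (Finset.mem_range.mpr (Nat.lt_succ_self i)) (by
      simpa [dist_comm] using hi.le)⟩
  -- the cutoff functions
  have gcont : ∀ J : ℕ, Continuous fun x => max 0 (1 - infDist x (F J) / (r / 2)) :=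
    fun J => continuous_const.max
      (continuous_const.sub ((continuous_infDist_pt (F J)).div_const _))
  have gbdd : ∀ J : ℕ, ∀ x : S, ‖max 0 (1 - infDist x (F J) / (r / 2))‖ ≤ 1 := by
    intro J x
    rw [Real.norm_eq_abs, abs_le]
    constructor
    · linarith [le_max_left (0:ℝ) (1 - infDist x (F J) / (r / 2))]
    · apply max_le (by norm_num)
      have h1 : 0 ≤ infDist x (F J) / (r / 2) :=
        div_nonneg infDist_nonneg (by linarith)
      linarith
  set g : ℕ → S →ᵇ ℝ := fun J =>
    BoundedContinuousFunction.ofNormedAddCommGroup _ (gcont J) 1 (gbdd J) with hg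
  have hgapp : ∀ J x, g J x = max 0 (1 - infDist x (F J) / (r / 2)) := fun J x => rfl
  have hg_one : ∀ J, ∀ x ∈ F J, g J x = 1 := by
    intro J x hx
    rw [hgapp, infDist_zero_of_mem hx]
    norm_num
  have hg_zero : ∀ J, ∀ x ∉ G J, g J x = 0 := by
    intro J x hx
    have hinf : r / 2 ≤ infDist x (F J) := by
      by_contra hlt
      push_neg at hlt
      obtain ⟨y, hy, hxy⟩ := (infDist_lt_iff (hFne J)).mp hlt
      simp only [hF, Set.mem_iUnion, exists_prop, Finset.mem_range] at hy
      obtain ⟨i, hi, hyi⟩ := hy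
      have : dist x (u i) ≤ dist x y + dist y (u i) := dist_triangle _ _ _
      have hxui : dist x (u i) ≤ r := by
        have := mem_closedBall.mp hyi
        linarith
      exact hx (Set.mem_biUnion (Finset.mem_range.mpr hi) (mem_closedBall.mpr hxui))
    rw [hgapp]
    have : (1:ℝ) ≤ infDist x (F J) / (r / 2) :=
      (one_le_div (by linarith)).mpr hinf
    rw [max_eq_left (by linarith)]
  have hg_nonneg : ∀ J x, 0 ≤ g J x := fun J x => le_max_left _ _
  have hg_le_one : ∀ J x, g J x ≤ 1 := by
    intro J x
    have := gbdd J x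
    rw [Real.norm_eq_abs, abs_le] at this
    exact this.2
  -- integral comparisons
  have hint_le : ∀ (J : ℕ) (ν : Measure S) [IsFiniteMeasure ν],
      ∫ x, g J x ∂ν ≤ (ν (G J)).toReal := by
    intro J ν _
    have h1 : ∫ x, g J x ∂ν ≤ ∫ x, (G J).indicator (fun _ => (1:ℝ)) x ∂ν := by
      apply integral_mono ((g J).integrable ν)
        ((integrable_const (1:ℝ)).indicator (hGclosed J).measurableSet)
      intro x
      by_cases hx : x ∈ G J
      · simp only [Set.indicator_of_mem hx]
        exact hg_le_one J x
      · simp only [Set.indicator_of_notMem hx]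
        exact le_of_eq (hg_zero J x hx)
    calc ∫ x, g J x ∂ν ≤ _ := h1
      _ = (ν (G J)).toReal := by
          rw [show (ν (G J)).toReal = ν.real (G J) from rfl, ← integral_indicator_one (hGclosed J).measurableSet]; rfl
  have hle_int : ∀ (J : ℕ) (ν : Measure S) [IsFiniteMeasure ν],
      (ν (F J)).toReal ≤ ∫ x, g J x ∂ν := by
    intro J ν _
    have h1 : ∫ x, (F J).indicator (fun _ => (1:ℝ)) x ∂ν ≤ ∫ x, g J x ∂ν := by
      apply integral_mono ((integrable_const (1:ℝ)).indicator (hFclosed J).measurableSet)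
        ((g J).integrable ν)
      intro x
      by_cases hx : x ∈ F J
      · simp only [Set.indicator_of_mem hx]
        exact le_of_eq (hg_one J x hx).symm
      · simp only [Set.indicator_of_notMem hx]
        exact hg_nonneg J x
    calc (ν (F J)).toReal
        = ∫ x, (F J).indicator (fun _ => (1:ℝ)) x ∂ν := by
          rw [show (ν (F J)).toReal = ν.real (F J) from rfl, ← integral_indicator_one (hFclosed J).measurableSet]; rfl
      _ ≤ _ := h1
  -- total masses converge
  have hmass : Tendsto (fun n => ((μ n) Set.univ).toReal) atTop
      (𝓝 ((μlim Set.univ).toReal)) := by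
    have h1 := hweak (BoundedContinuousFunction.const S (1:ℝ))
    have heq : ∀ (ν : Measure S) [IsFiniteMeasure ν],
        ∫ x, (BoundedContinuousFunction.const S (1:ℝ)) x ∂ν = (ν Set.univ).toReal := by
      intro ν _
      simp [BoundedContinuousFunction.const_apply]
      rfl
    simp only [heq] at h1
    exact h1
  -- complements of F J shrink to measure zero
  have hcompl : ∀ (ν : Measure S) [IsFiniteMeasure ν],
      Tendsto (fun J => (ν ((F J)ᶜ)).toReal) atTop (𝓝 0) := by
    intro ν _
    have h1 : Tendsto (fun J => ν ((F J)ᶜ)) atTop (𝓝 (ν (⋂ J, (F J)ᶜ))) := by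
      apply tendsto_measure_iInter_atTop
        (fun J => (hFclosed J).measurableSet.compl.nullMeasurableSet)
        (fun a b hab => Set.compl_subset_compl.mpr (hFmono hab))
        ⟨0, measure_ne_top ν _⟩
    have h2 : (⋂ J, (F J)ᶜ) = ∅ := by
      rw [← Set.compl_iUnion, hFunion, Set.compl_univ]
    rw [h2, measure_empty] at h1
    have := (ENNReal.tendsto_toReal (by simp : (0:ℝ≥0∞) ≠ ⊤)).comp h1
    simpa [Function.comp_def] using this
  -- measure of complement via toReal
  have hcompl_toReal : ∀ (ν : Measure S) [IsFiniteMeasure ν] (A : Set S), MeasurableSet A →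
      (ν (Aᶜ)).toReal = (ν Set.univ).toReal - (ν A).toReal := by
    intro ν _ A hA
    rw [measure_compl hA (measure_ne_top ν A),
      ENNReal.toReal_sub_of_le (measure_mono (Set.subset_univ A)) (measure_ne_top ν _)]
  -- choose J0 for the limit measure
  obtain ⟨J0, hJ0⟩ : ∃ J0, (μlim ((F J0)ᶜ)).toReal < δ / 2 :=
    ((hcompl μlim).eventually_lt_const (by linarith)).exists
  -- the quantities aₙ
  set a : ℕ → ℝ := fun n => ((μ n) Set.univ).toReal - ∫ x, g J0 x ∂(μ n) with ha
  have hatend : Tendsto a atTop (𝓝 ((μlim Set.univ).toReal - ∫ x, g J0 x ∂μlim)) :=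
    hmass.sub (hweak (g J0))
  have hlim_le : (μlim Set.univ).toReal - ∫ x, g J0 x ∂μlim ≤ (μlim ((F J0)ᶜ)).toReal := by
    rw [hcompl_toReal μlim (F J0) (hFclosed J0).measurableSet]
    have := hle_int J0 μlim
    linarith
  obtain ⟨N, hN⟩ : ∃ N, ∀ n ≥ N, a n < δ := by
    have : (μlim Set.univ).toReal - ∫ x, g J0 x ∂μlim < δ := lt_of_le_of_lt hlim_le
      (by linarith)
    exact eventually_atTop.mp (hatend.eventually_lt_const this)
  -- for small n use individual tightness
  have hsmall : ∀ n, ∃ J, ((μ n) ((F J)ᶜ)).toReal < δ :=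
    fun n => ((hcompl (μ n)).eventually_lt_const hδ).exists
  choose Jf hJf using hsmall
  set Jstar : ℕ := max J0 ((Finset.range N).sup Jf) with hJstar
  have hJ0star : J0 ≤ Jstar := le_max_left _ _
  have htoReal_mono : ∀ (ν : Measure S) [IsFiniteMeasure ν] (A B : Set S), A ⊆ B →
      (ν A).toReal ≤ (ν B).toReal := by
    intro ν _ A B hAB
    exact (ENNReal.toReal_le_toReal (measure_ne_top _ _) (measure_ne_top _ _)).mpr
      (measure_mono hAB)
  have himg : (⋃ y ∈ (Finset.range (Jstar + 1)).image u, closedBall y r) = G Jstar := by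
    ext x
    simp only [hG, Set.mem_iUnion, exists_prop, Finset.mem_image, Finset.mem_range]
    constructor
    · rintro ⟨y, ⟨i, hi, rfl⟩, hx⟩
      exact ⟨i, hi, hx⟩
    · rintro ⟨i, hi, hx⟩
      exact ⟨u i, ⟨i, hi, rfl⟩, hx⟩
  refine ⟨(Finset.range (Jstar + 1)).image u, ?_, ?_⟩
  · intro n
    rw [himg]
    rcases lt_or_ge n N with hn | hn
    · have hsub : (G Jstar)ᶜ ⊆ (F (Jf n))ᶜ := by
        apply Set.compl_subset_compl.mpr
        exact (hFmono (le_trans (Finset.le_sup (Finset.mem_range.mpr hn))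
          (le_max_right _ _))).trans (hFG Jstar)
      exact le_of_lt (lt_of_le_of_lt (htoReal_mono (μ n) _ _ hsub) (hJf n))
    · have hsub : (G Jstar)ᶜ ⊆ (G J0)ᶜ := Set.compl_subset_compl.mpr (hGmono hJ0star)
      have h1 : ((μ n) ((G J0)ᶜ)).toReal ≤ a n := by
        rw [hcompl_toReal (μ n) (G J0) (hGclosed J0).measurableSet, ha]
        have := hint_le J0 (μ n)
        simp only
        linarith
      exact le_of_lt (lt_of_le_of_lt (le_trans (htoReal_mono (μ n) _ _ hsub) h1) (hN n hn))
  · rw [himg]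
    have hsub : (G Jstar)ᶜ ⊆ (F J0)ᶜ :=
      Set.compl_subset_compl.mpr ((hFG J0).trans (hGmono hJ0star))
    exact le_of_lt (lt_of_le_of_lt (htoReal_mono μlim _ _ hsub) (by linarith))

private lemma aux_tight {S : Type*} [MetricSpace S] [CompleteSpace S]
    [SecondCountableTopology S] [MeasurableSpace S] [BorelSpace S] [Nonempty S]
    (μ : ℕ → Measure S) (μlim : Measure S)
    [∀ n, IsFiniteMeasure (μ n)] [IsFiniteMeasure μlim]
    (hweak : ∀ g : S →ᵇ ℝ,
      Tendsto (fun n => ∫ x, g x ∂(μ n)) atTop (𝓝 (∫ x, g x ∂μlim)))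
    {ε : ℝ} (hε : 0 < ε) :
    ∃ K : Set S, IsCompact K ∧ (∀ n, ((μ n) Kᶜ).toReal ≤ ε) ∧ (μlim Kᶜ).toReal ≤ ε := by
  have hex : ∀ m : ℕ, ∃ t : Finset S,
      (∀ n, ((μ n) ((⋃ y ∈ t, closedBall y ((1/2 : ℝ) ^ m))ᶜ)).toReal ≤ ε / 2 ^ (m + 1)) ∧
      ((μlim) ((⋃ y ∈ t, closedBall y ((1/2 : ℝ) ^ m))ᶜ)).toReal ≤ ε / 2 ^ (m + 1) := by
    intro m
    exact aux_ball μ μlim hweak (by positivity) (by positivity)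
  choose t ht1 ht2 using hex
  set A : ℕ → Set S := fun m => ⋃ y ∈ t m, closedBall y ((1/2 : ℝ) ^ m) with hA
  have hAclosed : ∀ m, IsClosed (A m) := fun m =>
    Set.Finite.isClosed_biUnion (Finset.finite_toSet _) fun y _ => isClosed_closedBall
  set K : Set S := ⋂ m, A m with hK
  have hKclosed : IsClosed K := isClosed_iInter hAclosed
  have hKtb : TotallyBounded K := by
    rw [Metric.totallyBounded_iff]
    intro η hη
    obtain ⟨m, hm⟩ : ∃ m : ℕ, (1/2 : ℝ) ^ m < η :=
      exists_pow_lt_of_lt_one hη (by norm_num)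
    refine ⟨(t m : Set S), (t m).finite_toSet, ?_⟩
    intro x hx
    have hxA : x ∈ A m := Set.mem_iInter.mp hx m
    simp only [hA, Set.mem_iUnion, exists_prop] at hxA
    obtain ⟨y, hy, hxy⟩ := hxA
    exact Set.mem_biUnion hy (lt_of_le_of_lt (mem_closedBall.mp hxy) hm)
  have hKcompact : IsCompact K := TotallyBounded.isCompact_of_isClosed hKtb hKclosed
  have hsum : (∑' m : ℕ, ENNReal.ofReal (ε / 2 ^ (m + 1))) = ENNReal.ofReal ε := by
    have hterm : ∀ m : ℕ, ENNReal.ofReal (ε / 2 ^ (m + 1))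
        = ENNReal.ofReal ε * 2⁻¹ ^ (m + 1) := by
      intro m
      rw [ENNReal.ofReal_div_of_pos (by positivity)]
      have h2 : ENNReal.ofReal ((2 : ℝ) ^ (m + 1)) = 2 ^ (m + 1) := by
        rw [ENNReal.ofReal_pow (by norm_num)]
        norm_num
      rw [h2, ENNReal.div_eq_inv_mul, mul_comm, ENNReal.inv_pow]
    simp only [hterm]
    rw [ENNReal.tsum_mul_left]
    have h3 : (∑' m : ℕ, (2 : ℝ≥0∞)⁻¹ ^ (m + 1)) = 1 := by
      have : ∀ m : ℕ, (2 : ℝ≥0∞)⁻¹ ^ (m + 1) = 2⁻¹ ^ m * 2⁻¹ := fun m => pow_succ _ _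
      simp only [this]
      rw [ENNReal.tsum_mul_right, ENNReal.tsum_geometric, ENNReal.one_sub_inv_two, inv_inv]
      exact ENNReal.mul_inv_cancel (by norm_num) (by norm_num)
    rw [h3, mul_one]
  have hbound : ∀ (ν : Measure S) [IsFiniteMeasure ν],
      (∀ m, (ν ((A m)ᶜ)).toReal ≤ ε / 2 ^ (m + 1)) → (ν Kᶜ).toReal ≤ ε := by
    intro ν _ hν
    have h1 : ν Kᶜ ≤ ∑' m, ν ((A m)ᶜ) := by
      rw [hK, Set.compl_iInter]
      exact measure_iUnion_le _
    have h2 : (∑' m, ν ((A m)ᶜ)) ≤ ∑' m, ENNReal.ofReal (ε / 2 ^ (m + 1)) := by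
      apply ENNReal.tsum_le_tsum
      intro m
      exact (ENNReal.le_ofReal_iff_toReal_le (measure_ne_top _ _) (by positivity)).mpr (hν m)
    exact ENNReal.toReal_le_of_le_ofReal hε.le (h1.trans (h2.trans_eq hsum))
  exact ⟨K, hKcompact, fun n => hbound (μ n) (ht1 · n), hbound μlim ht2⟩

end MBP

/-- generalized dominated convergence for weakly convergent measures:
on a Polish space `S`, if the finite measures `μ_n` converge weakly to the finite
measure `μ`, and the continuous functions `f_n`, uniformly bounded in sup norm,
converge to `f` uniformly on every compact subset of `S`, then
`∫ f_n dμ_n → ∫ f dμ`. -/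
theorem MBP.integral_tendsto_of_weak_convergence
    {S : Type*} [TopologicalSpace S] [PolishSpace S]
    [MeasurableSpace S] [BorelSpace S]
    (μ : ℕ → Measure S) (μlim : Measure S)
    [∀ n, IsFiniteMeasure (μ n)] [IsFiniteMeasure μlim]
    -- weak convergence: `∫ g dμ_n → ∫ g dμ` for every bounded continuous `g`
    (hweak : ∀ g : S →ᵇ ℝ,
      Tendsto (fun n => ∫ x, g x ∂(μ n)) atTop (nhds (∫ x, g x ∂μlim)))
    (f : ℕ → S → ℝ) (flim : S → ℝ)
    (hcont : ∀ n, Continuous (f n))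
    -- uniform boundedness: `sup_n ‖f_n‖_∞ < ∞`
    (hbdd : ∃ C : ℝ, ∀ n x, |f n x| ≤ C)
    -- uniform convergence on every compact subset
    (hunif : ∀ K : Set S, IsCompact K → TendstoUniformlyOn f flim atTop K) :
    Tendsto (fun n => ∫ x, f n x ∂(μ n)) atTop (nhds (∫ x, flim x ∂μlim)) := by
  rcases isEmpty_or_nonempty S with hS | hS
  · have h1 : ∀ n, ∫ x, f n x ∂(μ n) = 0 := by
      intro n
      rw [Measure.eq_zero_of_isEmpty (μ n), integral_zero_measure]
    have h2 : ∫ x, flim x ∂μlim = 0 := by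
      rw [Measure.eq_zero_of_isEmpty μlim, integral_zero_measure]
    simp only [h1, h2]
    exact tendsto_const_nhds
  letI := TopologicalSpace.upgradeIsCompletelyMetrizable S
  obtain ⟨C, hC⟩ := hbdd
  have hC0 : 0 ≤ C := le_trans (abs_nonneg _) (hC 0 (Classical.arbitrary S))
  -- continuity of the limit function
  have hflim_cont : Continuous flim := by
    apply SeqContinuous.continuous
    intro x p hxp
    have hK := hxp.isCompact_insert_range
    have hcf : ContinuousOn flim (insert p (Set.range x)) :=
      (hunif _ hK).continuousOn (Filter.Eventually.of_forall fun n => (hcont n).continuousOn).frequently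
    have hmem : ∀ k, x k ∈ insert p (Set.range x) := fun k =>
      Set.mem_insert_of_mem _ ⟨k, rfl⟩
    have hxp' : Tendsto x atTop (𝓝[insert p (Set.range x)] p) :=
      tendsto_nhdsWithin_iff.mpr ⟨hxp, Filter.Eventually.of_forall hmem⟩
    exact (hcf p (Set.mem_insert _ _)).tendsto.comp hxp'
  -- boundedness of the limit function
  have hflim_bdd : ∀ x, |flim x| ≤ C := by
    intro x
    have h1 : Tendsto (fun n => f n x) atTop (𝓝 (flim x)) :=
      (hunif {x} isCompact_singleton).tendsto_at rfl
    exact le_of_tendsto ((continuous_abs.tendsto _).comp h1)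
      (Filter.Eventually.of_forall fun n => hC n x)
  set flimBC : S →ᵇ ℝ := BoundedContinuousFunction.ofNormedAddCommGroup flim hflim_cont C
    (fun x => by rw [Real.norm_eq_abs]; exact hflim_bdd x) with hflimBC
  set fBC : ℕ → S →ᵇ ℝ := fun n =>
    BoundedContinuousFunction.ofNormedAddCommGroup (f n) (hcont n) C
      (fun x => by rw [Real.norm_eq_abs]; exact hC n x) with hfBC
  -- a uniform bound on the total masses
  obtain ⟨M, hM0, hM⟩ : ∃ M, 0 ≤ M ∧ ∀ n, ((μ n) Set.univ).toReal ≤ M := by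
    have h1 := hweak (BoundedContinuousFunction.const S (1:ℝ))
    have heq : ∀ (ν : Measure S) [IsFiniteMeasure ν],
        ∫ x, (BoundedContinuousFunction.const S (1:ℝ)) x ∂ν = (ν Set.univ).toReal := by
      intro ν _
      simp [BoundedContinuousFunction.const_apply]
      rfl
    simp only [heq] at h1
    obtain ⟨M, hM⟩ := h1.bddAbove_range
    exact ⟨max M 0, le_max_right _ _, fun n =>
      le_trans (hM (Set.mem_range_self n)) (le_max_left _ _)⟩
  rw [Metric.tendsto_atTop]
  intro ε hε
  obtain ⟨K, hKc, hKμ, -⟩ := MBP.aux_tight μ μlim hweak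
    (show (0:ℝ) < ε / (8 * (C + 1)) by positivity)
  set η : ℝ := ε / (4 * (M + 1)) with hη
  have hE1 : ∀ᶠ n in atTop, ∀ x ∈ K, dist (flim x) (f n x) < η :=
    (Metric.tendstoUniformlyOn_iff.mp (hunif K hKc)) η (by positivity)
  obtain ⟨N1, hN1⟩ := eventually_atTop.mp hE1
  obtain ⟨N2, hN2⟩ := Metric.tendsto_atTop.mp (hweak flimBC) (ε / 4) (by positivity)
  refine ⟨max N1 N2, fun n hn => ?_⟩
  have hn1 : N1 ≤ n := le_trans (le_max_left _ _) hn
  have hn2 : N2 ≤ n := le_trans (le_max_right _ _) hn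
  have hflimBC_eq : ∀ x, flimBC x = flim x := fun x => rfl
  have hint_f : Integrable (f n) (μ n) := (fBC n).integrable _
  have hint_flim : Integrable flim (μ n) := flimBC.integrable _
  -- split the distance
  have htri : dist (∫ x, f n x ∂(μ n)) (∫ x, flim x ∂μlim)
      ≤ dist (∫ x, f n x ∂(μ n)) (∫ x, flim x ∂(μ n))
        + dist (∫ x, flim x ∂(μ n)) (∫ x, flim x ∂μlim) := dist_triangle _ _ _
  -- second term
  have hterm2 : dist (∫ x, flim x ∂(μ n)) (∫ x, flim x ∂μlim) < ε / 4 := by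
    have := hN2 n hn2
    simpa only [hflimBC_eq] using this
  -- first term
  have hterm1 : dist (∫ x, f n x ∂(μ n)) (∫ x, flim x ∂(μ n)) ≤ ε / 4 + ε / 4 := by
    rw [Real.dist_eq, ← integral_sub hint_f hint_flim]
    have hsplit : (∫ x in K, (f n x - flim x) ∂(μ n))
        + (∫ x in Kᶜ, (f n x - flim x) ∂(μ n)) = ∫ x, (f n x - flim x) ∂(μ n) :=
      integral_add_compl hKc.measurableSet (hint_f.sub hint_flim)
    rw [← hsplit]
    have hK1 : |∫ x in K, (f n x - flim x) ∂(μ n)| ≤ η * ((μ n) K).toReal := by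
      rw [← Real.norm_eq_abs]
      apply norm_setIntegral_le_of_norm_le_const (measure_lt_top _ _)
      intro x hx
      rw [Real.norm_eq_abs, abs_sub_comm, ← Real.dist_eq]
      exact (hN1 n hn1 x hx).le
    have hK2 : |∫ x in Kᶜ, (f n x - flim x) ∂(μ n)| ≤ (2 * C) * ((μ n) Kᶜ).toReal := by
      rw [← Real.norm_eq_abs]
      apply norm_setIntegral_le_of_norm_le_const (measure_lt_top _ _)
      intro x _
      rw [Real.norm_eq_abs]
      calc |f n x - flim x| ≤ |f n x| + |flim x| := abs_sub _ _
        _ ≤ 2 * C := by linarith [hC n x, hflim_bdd x]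
    have hb1 : η * ((μ n) K).toReal ≤ ε / 4 := by
      have hKle : ((μ n) K).toReal ≤ M :=
        le_trans ((ENNReal.toReal_le_toReal (measure_ne_top _ _) (measure_ne_top _ _)).mpr
          (measure_mono (Set.subset_univ K))) (hM n)
      have hηpos : 0 ≤ η := by positivity
      have : η * ((μ n) K).toReal ≤ η * (M + 1) := by nlinarith
      have heq : η * (M + 1) = ε / 4 := by
        rw [hη]; field_simp
      linarith
    have hb2 : (2 * C) * ((μ n) Kᶜ).toReal ≤ ε / 4 := by
      have h1 : ((μ n) Kᶜ).toReal ≤ ε / (8 * (C + 1)) := hKμ n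
      have h2 : (0:ℝ) ≤ ((μ n) Kᶜ).toReal := ENNReal.toReal_nonneg
      have h3 : (2 * C) * ((μ n) Kᶜ).toReal ≤ (2 * C) * (ε / (8 * (C + 1))) := by nlinarith
      have h4 : (2 * C) * (ε / (8 * (C + 1))) ≤ ε / 4 := by
        have h5 : (2 * C) * (ε / (8 * (C + 1))) = (2 * C * ε) / (8 * (C + 1)) := by ring
        rw [h5, div_le_div_iff₀ (by positivity) (by norm_num)]
        nlinarith
      linarith
    calc |∫ x in K, (f n x - flim x) ∂(μ n) + ∫ x in Kᶜ, (f n x - flim x) ∂(μ n)|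
        ≤ |∫ x in K, (f n x - flim x) ∂(μ n)| + |∫ x in Kᶜ, (f n x - flim x) ∂(μ n)| :=
          abs_add_le _ _
      _ ≤ ε / 4 + ε / 4 := add_le_add (hK1.trans hb1) (hK2.trans hb2)
  calc dist (∫ x, f n x ∂(μ n)) (∫ x, flim x ∂μlim)
      ≤ _ := htri
    _ < (ε / 4 + ε / 4) + ε / 4 := by linarith
    _ < ε := by linarith
end
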